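/- arXiv:1805.05751 — 4 statements merged into one kernel-verified Lean document; each statement's English description precedes it below -/
import Mathlib

section
/- For f(x,y) = 2x² + y² + 4xy + (4/3)y³ - (1/4)y⁴, the Jacobian of the saddle-point gradient dynamics at the origin, namely the matrix [[-4, -4], [4, 2]], has both eigenvalues with strictly negative real part; hence (0,0) is a linearly stable stationary point of the simultaneous gradient descent/ascent dynamics even though ∂²f/∂y²(0,0) = 2 > 0, so (0,0) is not a local maximum in y. -/
/-!
The Jacobian has trace `-2 < 0` and determinant `8 > 0`. For a real `2 × 2` matrix this places
both roots of `λ² - tr λ + det` in the open left half-plane: a non-real root has real part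
`tr / 2`, and a real root `λ ≥ 0` would make the polynomial positive.

The slice `y ↦ f (0, y) = y² + (4/3) y³ - y⁴ / 4` has second derivative `2` at `0`, so by the
second-derivative test it has a local minimum there; if it also had a local maximum it would be
locally constant, and its second derivative would vanish.
-/

open Polynomial Filter Topology

theorem Complex.re_neg_of_sq_add_mul_add_eq_zero {b c : ℝ} (hb : 0 < b) (hc : 0 < c) {μ : ℂ}
    (hμ : μ ^ 2 + b * μ + c = 0) : μ.re < 0 := by
  have hre : μ.re ^ 2 - μ.im ^ 2 + b * μ.re + c = 0 := by
    simpa [sq] using congrArg Complex.re hμ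
  have him : μ.im * (2 * μ.re + b) = 0 := by
    have := congrArg Complex.im hμ
    simp only [sq, add_im, mul_im, ofReal_re, ofReal_im, zero_im, zero_mul, add_zero] at this
    linarith
  rcases mul_eq_zero.mp him with hreal | hmid
  · rw [hreal] at hre
    nlinarith
  · linarith

theorem Matrix.re_neg_of_isRoot_charpoly_map_ofReal {A : Matrix (Fin 2) (Fin 2) ℝ}
    (htr : A.trace < 0) (hdet : 0 < A.det) {μ : ℂ}
    (hμ : (A.map Complex.ofReal).charpoly.IsRoot μ) : μ.re < 0 := by
  refine Complex.re_neg_of_sq_add_mul_add_eq_zero (neg_pos.mpr htr) hdet ?_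
  rw [show A.map Complex.ofReal = A.map Complex.ofRealHom from rfl, Matrix.charpoly_map,
    charpoly_fin_two] at hμ
  simpa [sub_eq_add_neg] using hμ

theorem Polynomial.deriv_deriv_eval {𝕜 : Type*} [NontriviallyNormedField 𝕜] (p : 𝕜[X]) :
    deriv (deriv fun x => p.eval x) = fun x => (derivative (derivative p)).eval x := by
  have hderiv : deriv (fun x => p.eval x) = fun x => p.derivative.eval x := by
    funext x
    exact p.deriv
  rw [hderiv]
  funext x
  exact p.derivative.deriv

theorem not_isLocalMax_of_deriv_deriv_pos {f : ℝ → ℝ} {x : ℝ} (hc : ContinuousAt f x)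
    (hpos : 0 < deriv (deriv f) x) : ¬ IsLocalMax f x := by
  intro hmax
  have hmin : IsLocalMin f x := isLocalMin_of_deriv_deriv_pos hpos hmax.deriv_eq_zero hc
  have hconst : f =ᶠ[𝓝 x] fun _ => f x :=
    (hmin.and hmax).mono fun y hy => le_antisymm hy.2 hy.1
  have hderiv : deriv f =ᶠ[𝓝 x] fun _ => 0 := hconst.deriv.trans (by simp)
  simp [hderiv.deriv_eq] at hpos

theorem stmt_2 (f : ℝ × ℝ → ℝ)
    (hf : ∀ x y : ℝ, f (x, y) = 2*x^2 + y^2 + 4*x*y + (4/3)*y^3 - (1/4)*y^4)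
    (J : Matrix (Fin 2) (Fin 2) ℝ)
    (hJ : J = !![-4, -4; 4, 2]) :
    (∀ μ : ℂ, (J.map Complex.ofReal).charpoly.IsRoot μ → μ.re < 0) ∧
    deriv (deriv (fun y => f (0, y))) 0 = 2 ∧
    ¬ IsLocalMax (fun y => f (0, y)) 0 := by
  subst hJ
  have hslice : (fun y => f (0, y))
      = fun y => (X ^ 2 + C (4 / 3) * X ^ 3 - C (1 / 4) * X ^ 4 : ℝ[X]).eval y := by
    funext y
    simp [hf]
  have hsecond : deriv (deriv fun y => f (0, y)) 0 = 2 := by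
    rw [hslice, deriv_deriv_eval]
    norm_num
  refine ⟨fun μ hμ => Matrix.re_neg_of_isRoot_charpoly_map_ofReal ?_ ?_ hμ, hsecond, ?_⟩
  · norm_num [Matrix.trace_fin_two]
  · norm_num [Matrix.det_fin_two]
  · exact not_isLocalMax_of_deriv_deriv_pos (hslice ▸ (Polynomial.continuous _).continuousAt)
      (hsecond ▸ two_pos)
end

section
/- Let f be C², and define the CESP update z_{t+1} = z_t + v_{z_t} + η(-∇ₓf(z_t), ∇ᵧf(z_t)), where v_z = (v_z⁻, v_z⁺) with v_z⁻ = 1{λₓ<0}·(λₓ/(2ρₓ))·sgn(vₓᵀ∇ₓf(z))·vₓ and v_z⁺ = 1{λᵧ>0}·(λᵧ/(2ρᵧ))·sgn(vᵧᵀ∇ᵧf(z))·vᵧ, where (λₓ, vₓ) is a minimal eigenpair of ∇²ₓf(z) and (λᵧ, vᵧ) a maximal eigenpair of ∇²ᵧf(z). Then z is a fixed point of this update if and only if ∇f(z) = 0, λ_min(∇²ₓf(z)) ≥ 0, and λ_max(∇²ᵧf(z)) ≤ 0. -/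
/-!
If `g = 0` and the curvature indicators are off, the correction terms vanish. Conversely, if the
`x`-correction is on (`λₓ < 0`), the fixed-point equation forces `g` to be a multiple of `v`, and
pairing with `v` gives `η ⟪v, g⟫ = (λₓ / 2ρₓ) sgn ⟪v, g⟫ ‖v‖²`: the two sides have opposite signs.
Once the correction is off, the equation reads `η g = 0`. The `y`-block is the same after negation.
-/

open RealInnerProductSpace

section SignStep

variable {E : Type*} [NormedAddCommGroup E] [InnerProductSpace ℝ E] {sgn : ℝ → ℝ}

theorem smul_sign_inner_ne_smul (hsgn : ∀ t, 0 ≤ sgn t * t) (hsgn₀ : ∀ t, sgn t ≠ 0)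
    {a η : ℝ} (ha : a < 0) (hη : 0 < η) {v g : E} (hv : v ≠ 0) :
    (a * sgn ⟪v, g⟫) • v ≠ η • g := by
  intro h
  set s := sgn ⟪v, g⟫
  have hpair : a * s * ‖v‖ ^ 2 = η * ⟪v, g⟫ := by
    simpa [real_inner_smul_right, real_inner_self_eq_norm_sq] using congrArg (⟪v, ·⟫) h
  have hs : 0 < s ^ 2 := by have := hsgn₀ ⟪v, g⟫; positivity
  have hlt : a * s ^ 2 * ‖v‖ ^ 2 < 0 :=
    mul_neg_of_neg_of_pos (mul_neg_of_neg_of_pos ha hs) (by positivity)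
  have hge : 0 ≤ η * (s * ⟪v, g⟫) := mul_nonneg hη.le (hsgn _)
  have hmul : a * s ^ 2 * ‖v‖ ^ 2 = η * (s * ⟪v, g⟫) := by linear_combination s * hpair
  linarith

theorem ite_smul_sub_smul_eq_zero_iff (hsgn : ∀ t, 0 ≤ sgn t * t) (hsgn₀ : ∀ t, sgn t ≠ 0)
    {p : Prop} [Decidable p] {a η : ℝ} (ha : p → a < 0) (hη : 0 < η) {v g : E} (hv : v ≠ 0) :
    (if p then (a * sgn ⟪v, g⟫) • v else 0) - η • g = 0 ↔ g = 0 ∧ ¬p := by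
  by_cases hp : p
  · simp only [hp, if_true, not_true_eq_false, and_false, iff_false, sub_eq_zero]
    exact smul_sign_inner_ne_smul hsgn hsgn₀ (ha hp) hη hv
  · simp [hp, hη.ne']

end SignStep

theorem stmt_11_general {k d : ℕ}
    (ρx ρy η : ℝ) (hρx : 0 < ρx) (hρy : 0 < ρy) (hη : 0 < η)
    (sgn : ℝ → ℝ) (hsgn : ∀ t, sgn t = if 0 ≤ t then 1 else -1)
    (gx : EuclideanSpace ℝ (Fin k))
    (gy : EuclideanSpace ℝ (Fin d))
    (lamx lamy : ℝ) (vx : EuclideanSpace ℝ (Fin k)) (vy : EuclideanSpace ℝ (Fin d))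
    (hvx : ‖vx‖ = 1) (hvy : ‖vy‖ = 1)
    (vminus : EuclideanSpace ℝ (Fin k))
    (hvm : vminus = if lamx < 0 then ((lamx / (2*ρx)) * sgn ⟪vx, gx⟫) • vx else 0)
    (vplus : EuclideanSpace ℝ (Fin d))
    (hvp : vplus = if 0 < lamy then ((lamy / (2*ρy)) * sgn ⟪vy, gy⟫) • vy else 0) :
    (vminus - η • gx = 0 ∧ vplus + η • gy = 0) ↔
      (gx = 0 ∧ gy = 0 ∧ 0 ≤ lamx ∧ lamy ≤ 0) := by
  have hsgn_mul : ∀ t, 0 ≤ sgn t * t := fun t => by rw [hsgn]; split_ifs <;> linarith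
  have hsgn_ne : ∀ t, sgn t ≠ 0 := fun t => by rw [hsgn]; split_ifs <;> norm_num
  have hx : vminus - η • gx = 0 ↔ gx = 0 ∧ ¬lamx < 0 := by
    rw [hvm]
    exact ite_smul_sub_smul_eq_zero_iff hsgn_mul hsgn_ne
      (fun h => div_neg_of_neg_of_pos h (by positivity)) hη (norm_ne_zero_iff.mp (by simp [hvx]))
  have hy : vplus + η • gy = 0 ↔ gy = 0 ∧ ¬0 < lamy := by
    -- negation puts the ascent step in the descent form, with coefficient `-λᵧ / 2ρᵧ < 0`
    rw [← neg_eq_zero, neg_add, ← sub_eq_add_neg, hvp, apply_ite Neg.neg, neg_zero, ← neg_smul,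
      ← neg_mul]
    exact ite_smul_sub_smul_eq_zero_iff hsgn_mul hsgn_ne
      (fun h => neg_neg_of_pos (div_pos h (by positivity))) hη (norm_ne_zero_iff.mp (by simp [hvy]))
  rw [hx, hy, not_lt, not_lt]
  tauto

theorem stmt_11 {k d : ℕ}
    (f : EuclideanSpace ℝ (Fin k) × EuclideanSpace ℝ (Fin d) → ℝ)
    (hf : ContDiff ℝ 2 f)
    (ρx ρy η : ℝ) (hρx : 0 < ρx) (hρy : 0 < ρy) (hη : 0 < η)
    (sgn : ℝ → ℝ) (hsgn : ∀ t, sgn t = if 0 ≤ t then 1 else -1)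
    (x₀ : EuclideanSpace ℝ (Fin k)) (y₀ : EuclideanSpace ℝ (Fin d))
    (gx : EuclideanSpace ℝ (Fin k)) (hgx : gx = gradient (fun u => f (u, y₀)) x₀)
    (gy : EuclideanSpace ℝ (Fin d)) (hgy : gy = gradient (fun u => f (x₀, u)) y₀)
    (Hx : EuclideanSpace ℝ (Fin k) →L[ℝ] EuclideanSpace ℝ (Fin k))
    (hHx : Hx = fderiv ℝ (fun u => gradient (fun u' => f (u', y₀)) u) x₀)
    (Hy : EuclideanSpace ℝ (Fin d) →L[ℝ] EuclideanSpace ℝ (Fin d))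
    (hHy : Hy = fderiv ℝ (fun u => gradient (fun u' => f (x₀, u')) u) y₀)
    (lamx lamy : ℝ) (vx : EuclideanSpace ℝ (Fin k)) (vy : EuclideanSpace ℝ (Fin d))
    (hvx : ‖vx‖ = 1) (hvy : ‖vy‖ = 1)
    (hevx : Hx vx = lamx • vx) (hevy : Hy vy = lamy • vy)
    (hmin : ∀ u, lamx * ‖u‖^2 ≤ ⟪u, Hx u⟫)
    (hmax : ∀ u, ⟪u, Hy u⟫ ≤ lamy * ‖u‖^2)
    (vminus : EuclideanSpace ℝ (Fin k))
    (hvm : vminus = if lamx < 0 then ((lamx / (2*ρx)) * sgn ⟪vx, gx⟫) • vx else 0)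
    (vplus : EuclideanSpace ℝ (Fin d))
    (hvp : vplus = if 0 < lamy then ((lamy / (2*ρy)) * sgn ⟪vy, gy⟫) • vy else 0) :
    (vminus - η • gx = 0 ∧ vplus + η • gy = 0) ↔
      (gx = 0 ∧ gy = 0 ∧ 0 ≤ lamx ∧ lamy ≤ 0) :=
  stmt_11_general ρx ρy η hρx hρy hη sgn hsgn gx gy lamx lamy vx vy hvx hvy vminus hvm vplus hvp
end

section
/- Let f : ℝᵏ × ℝᵈ → ℝ be C² with ρₓ-Lipschitz Hessian in x, Lₓ-Lipschitz gradient in x, and ‖∇ₓf‖ ≤ ℓₓ everywhere. Let λ = λ_min(∇²ₓf(x,y)) < 0 with unit eigenvector v chosen so vᵀ∇ₓf(x,y) ≤ 0, set α = -λ/(2ρₓ), and take the step Δ = αv - η∇ₓf(x,y). If η ≤ (√(9Lₓ² + 48ρₓℓₓ) - 3Lₓ)/(8ρₓℓₓ), then f(x+Δ, y) ≤ f(x,y) - (η/2)‖∇ₓf(x,y)‖² + λ³/(24ρₓ²). -/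
/-!
Expand `u ↦ f (u, y)` to second order at `x`; the `ρ`-Lipschitz Hessian bounds the remainder
by `ρ/6 ‖Δ‖³`. Along `Δ = α v - η g` (with `g = ∇ₓ f (x, y)`) the cross terms carry the sign of
`⟪v, g⟫ ≤ 0` and `‖∇²ₓ f‖ ≤ L`, so the quadratic model is at most
`-η ‖g‖² + λ α²/2 + L η² ‖g‖²/2`, while `‖Δ‖³ ≤ 4 α³ + 4 η³ ℓ ‖g‖²`. The bound on `η` says exactly
that `η` lies below the positive root of `4ρℓ η² + 3L η = 3`, which makes the coefficient of
`‖g‖²` at most `-η/2`; the choice `α = -λ/(2ρ)` minimises `λ α²/2 + 2ρ α³/3`, with value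
`λ³/(24ρ²)`.
-/

open RealInnerProductSpace

section
variable {E F : Type*} [NormedAddCommGroup E] [NormedSpace ℝ E] [NormedAddCommGroup F]
  [NormedSpace ℝ F]

theorem norm_le_div_of_norm_deriv_le_pow {f f' : ℝ → F} {C : ℝ} (n : ℕ)
    (hf : ∀ t, HasDerivAt f (f' t) t) (hf0 : f 0 = 0)
    (hbound : ∀ t ∈ Set.Ico (0 : ℝ) 1, ‖f' t‖ ≤ C * t ^ n) :
    ‖f 1‖ ≤ C / (n + 1) := by
  have hB (t : ℝ) : HasDerivAt (fun t => C / (n + 1) * t ^ (n + 1)) (C * t ^ n) t :=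
    ((hasDerivAt_pow (n + 1) t).const_mul (C / (n + 1))).congr_deriv (by field_simp; simp)
  simpa using image_norm_le_of_norm_deriv_right_le_deriv_boundary
    (fun t _ => (hf t).continuousAt.continuousWithinAt) (fun t _ => (hf t).hasDerivWithinAt)
    (by simp [hf0]) hB hbound (Set.right_mem_Icc.2 zero_le_one)

theorem hasDerivAt_comp_add_smul {G : E → F} {G' : E →L[ℝ] F} {x w : E} {t : ℝ}
    (hG : HasFDerivAt G G' (x + t • w)) :
    HasDerivAt (fun s : ℝ => G (x + s • w)) (G' w) t := by
  simpa [Function.comp_def] using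
    hG.comp_hasDerivAt t (((hasDerivAt_id t).smul_const w).const_add x)

theorem norm_sub_sub_fderiv_le_of_lipschitz_fderiv {G : E → F} {ρ : ℝ}
    (hG : Differentiable ℝ G)
    (hlip : ∀ u u', ‖fderiv ℝ G u - fderiv ℝ G u'‖ ≤ ρ * ‖u - u'‖) (x w : E) :
    ‖G (x + w) - G x - fderiv ℝ G x w‖ ≤ ρ / 2 * ‖w‖ ^ 2 := by
  have hderiv (t : ℝ) : HasDerivAt (fun s : ℝ => G (x + s • w) - G x - s • fderiv ℝ G x w)
      (fderiv ℝ G (x + t • w) w - fderiv ℝ G x w) t :=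
    ((hasDerivAt_comp_add_smul (hG _).hasFDerivAt).sub_const _).sub
      (by simpa using (hasDerivAt_id t).smul_const (fderiv ℝ G x w))
  have hbound : ∀ t ∈ Set.Ico (0 : ℝ) 1,
      ‖fderiv ℝ G (x + t • w) w - fderiv ℝ G x w‖ ≤ ρ * ‖w‖ ^ 2 * t ^ 1 := by
    rintro t ⟨ht, -⟩
    calc ‖fderiv ℝ G (x + t • w) w - fderiv ℝ G x w‖
        ≤ ‖fderiv ℝ G (x + t • w) - fderiv ℝ G x‖ * ‖w‖ := by
          rw [← sub_apply]; exact ContinuousLinearMap.le_opNorm _ _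
      _ ≤ ρ * ‖t • w‖ * ‖w‖ := by
          gcongr; simpa using hlip (x + t • w) x
      _ = ρ * ‖w‖ ^ 2 * t ^ 1 := by rw [norm_smul, Real.norm_of_nonneg ht]; ring
  have := norm_le_div_of_norm_deriv_le_pow 1 hderiv (by simp) hbound
  norm_num at this
  linarith

end

section
variable {E : Type*} [NormedAddCommGroup E] [InnerProductSpace ℝ E] [CompleteSpace E]
  {φ : E → ℝ}

theorem ContDiff.differentiable_gradient (hφ : ContDiff ℝ 2 φ) :
    Differentiable ℝ (gradient φ) :=
  ((InnerProductSpace.toDual ℝ E).symm.contDiff.comp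
    (hφ.fderiv_right (by norm_num))).differentiable one_ne_zero

theorem inner_fderiv_gradient_apply {x : E} (hG : DifferentiableAt ℝ (gradient φ) x)
    (hφ' : DifferentiableAt ℝ (fderiv ℝ φ) x) (a b : E) :
    ⟪fderiv ℝ (gradient φ) x a, b⟫ = fderiv ℝ (fderiv ℝ φ) x a b := by
  have h : (fun z => ⟪gradient φ z, b⟫) = fun z => fderiv ℝ φ z b :=
    funext fun z => inner_gradient_left
  have := congrArg (fun g => fderiv ℝ g x a) h
  rw [fderiv_inner_apply ℝ hG (differentiableAt_const b),
    fderiv_clm_apply hφ' (differentiableAt_const b)] at this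
  simpa using this

theorem ContDiff.isSymmetric_fderiv_gradient (hφ : ContDiff ℝ 2 φ) (x : E) :
    (fderiv ℝ (gradient φ) x : E →ₗ[ℝ] E).IsSymmetric := by
  intro a b
  change ⟪fderiv ℝ (gradient φ) x a, b⟫ = ⟪a, fderiv ℝ (gradient φ) x b⟫
  have hφ' := (hφ.fderiv_right (m := 1) (by norm_num)).differentiable one_ne_zero x
  rw [real_inner_comm _ a,
    inner_fderiv_gradient_apply (hφ.differentiable_gradient x) hφ',
    inner_fderiv_gradient_apply (hφ.differentiable_gradient x) hφ']
  exact (hφ.contDiffAt.isSymmSndFDerivAt (by simp)).eq a b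

theorem le_add_inner_gradient_add_half_inner_fderiv_gradient {ρ : ℝ}
    (hφ : Differentiable ℝ φ) (hG : Differentiable ℝ (gradient φ))
    (hlip : ∀ u u', ‖fderiv ℝ (gradient φ) u - fderiv ℝ (gradient φ) u'‖ ≤ ρ * ‖u - u'‖)
    (x w : E) :
    φ (x + w) ≤ φ x + ⟪gradient φ x, w⟫ + 1 / 2 * ⟪fderiv ℝ (gradient φ) x w, w⟫
      + ρ / 6 * ‖w‖ ^ 3 := by
  set H := fderiv ℝ (gradient φ) x
  have hderiv (t : ℝ) : HasDerivAt
      (fun s : ℝ => φ (x + s • w) - φ x - s * ⟪gradient φ x, w⟫ - s ^ 2 / 2 * ⟪H w, w⟫)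
      ⟪gradient φ (x + t • w) - gradient φ x - H (t • w), w⟫ t := by
    have h1 := hasDerivAt_comp_add_smul (hφ (x + t • w)).hasGradientAt.hasFDerivAt
    have h2 := (hasDerivAt_id t).mul_const ⟪gradient φ x, w⟫
    have h3 := ((hasDerivAt_pow 2 t).div_const 2).mul_const ⟪H w, w⟫
    refine (((h1.sub_const (φ x)).sub h2).sub h3).congr_deriv ?_
    simp [inner_sub_left, inner_smul_left]
  have hbound : ∀ t ∈ Set.Ico (0 : ℝ) 1,
      ‖⟪gradient φ (x + t • w) - gradient φ x - H (t • w), w⟫‖ ≤ ρ / 2 * ‖w‖ ^ 3 * t ^ 2 := by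
    rintro t ⟨ht, -⟩
    calc ‖⟪gradient φ (x + t • w) - gradient φ x - H (t • w), w⟫‖
        ≤ ‖gradient φ (x + t • w) - gradient φ x - H (t • w)‖ * ‖w‖ := norm_inner_le_norm _ _
      _ ≤ ρ / 2 * ‖t • w‖ ^ 2 * ‖w‖ := by
          gcongr; exact norm_sub_sub_fderiv_le_of_lipschitz_fderiv hG hlip x (t • w)
      _ = ρ / 2 * ‖w‖ ^ 3 * t ^ 2 := by rw [norm_smul, Real.norm_of_nonneg ht]; ring
  have := norm_le_div_of_norm_deriv_le_pow 2 hderiv (by simp) hbound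
  simp only [one_smul, one_mul, one_pow, Nat.cast_ofNat, Real.norm_eq_abs] at this
  linarith [le_abs_self (φ (x + w) - φ x - ⟪gradient φ x, w⟫ - 1 / 2 * ⟪H w, w⟫)]

end

section
variable {E : Type*} [NormedAddCommGroup E] [InnerProductSpace ℝ E]

theorem inner_add_half_inner_apply_smul_sub_smul_le {H : E →L[ℝ] E}
    (hH : (H : E →ₗ[ℝ] E).IsSymmetric) {L lam α η : ℝ} {v g : E} (hHL : ‖H‖ ≤ L)
    (hv : ‖v‖ = 1) (hev : H v = lam • v) (hlam : lam ≤ 0) (hsign : ⟪v, g⟫ ≤ 0)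
    (hα : 0 ≤ α) (hη : 0 ≤ η) :
    ⟪g, α • v - η • g⟫ + 1 / 2 * ⟪H (α • v - η • g), α • v - η • g⟫
      ≤ -η * ‖g‖ ^ 2 + lam * α ^ 2 / 2 + L * η ^ 2 / 2 * ‖g‖ ^ 2 := by
  have hvv : ⟪v, v⟫ = 1 := by rw [real_inner_self_eq_norm_sq, hv, one_pow]
  have hgv : ⟪H g, v⟫ = lam * ⟪v, g⟫ := by
    rw [show ⟪H g, v⟫ = ⟪g, H v⟫ from hH g v, hev, inner_smul_right, real_inner_comm]
  have hgg : ⟪H g, g⟫ ≤ L * ‖g‖ ^ 2 :=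
    calc ⟪H g, g⟫ ≤ ‖H g‖ * ‖g‖ := real_inner_le_norm _ _
      _ ≤ ‖H‖ * ‖g‖ * ‖g‖ := by gcongr; exact H.le_opNorm g
      _ ≤ L * ‖g‖ ^ 2 := by nlinarith [norm_nonneg g]
  simp only [map_sub, map_smul, hev, inner_sub_left, inner_sub_right, inner_smul_left,
    inner_smul_right, hvv, hgv, real_inner_comm v g, real_inner_self_eq_norm_sq, conj_trivial]
  nlinarith [mul_nonpos_of_nonneg_of_nonpos hα hsign,
    mul_nonneg (mul_nonneg hα hη) (mul_nonneg_of_nonpos_of_nonpos hlam hsign),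
    mul_le_mul_of_nonneg_left hgg (sq_nonneg η)]

theorem norm_smul_sub_smul_pow_three_le {α η : ℝ} {v g : E} (hv : ‖v‖ = 1)
    (hα : 0 ≤ α) (hη : 0 ≤ η) :
    ‖α • v - η • g‖ ^ 3 ≤ 4 * (α ^ 3 + (η * ‖g‖) ^ 3) :=
  calc ‖α • v - η • g‖ ^ 3 ≤ (α + η * ‖g‖) ^ 3 := by
        gcongr
        calc ‖α • v - η • g‖ ≤ ‖α • v‖ + ‖η • g‖ := norm_sub_le _ _
          _ = α + η * ‖g‖ := by
            rw [norm_smul, norm_smul, hv, Real.norm_of_nonneg hα, Real.norm_of_nonneg hη, mul_one]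
    _ ≤ 2 ^ (3 - 1) * (α ^ 3 + (η * ‖g‖) ^ 3) := add_pow_le hα (by positivity) 3
    _ = 4 * (α ^ 3 + (η * ‖g‖) ^ 3) := by norm_num

end

theorem mul_sq_add_mul_le_of_le_quadratic_root {a b c η : ℝ} (ha : 0 < a) (hc : 0 ≤ c)
    (hη : 0 ≤ 2 * a * η + b) (h : η ≤ (Real.sqrt (b ^ 2 + 4 * a * c) - b) / (2 * a)) :
    a * η ^ 2 + b * η ≤ c := by
  have hroot : 2 * a * η + b ≤ Real.sqrt (b ^ 2 + 4 * a * c) := by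
    rw [le_div_iff₀ (by positivity)] at h; linarith
  have hsq := pow_le_pow_left₀ hη hroot 2
  rw [Real.sq_sqrt (by positivity)] at hsq
  nlinarith

theorem stmt_16_general {k d : ℕ}
    (f : EuclideanSpace ℝ (Fin k) × EuclideanSpace ℝ (Fin d) → ℝ)
    (hf : ContDiff ℝ 2 f)
    (ρ L ℓ η : ℝ) (hρ : 0 < ρ) (hL : 0 < L) (hℓ : 0 < ℓ) (hη : 0 < η)
    (gradx : EuclideanSpace ℝ (Fin k) → EuclideanSpace ℝ (Fin d) → EuclideanSpace ℝ (Fin k))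
    (hgradx : ∀ x y, gradx x y = gradient (fun u => f (u, y)) x)
    (Hx : EuclideanSpace ℝ (Fin k) → EuclideanSpace ℝ (Fin d) →
      (EuclideanSpace ℝ (Fin k) →L[ℝ] EuclideanSpace ℝ (Fin k)))
    (hHx : ∀ x y, Hx x y = fderiv ℝ (fun u => gradx u y) x)
    (hHlip : ∀ x x' y, ‖Hx x y - Hx x' y‖ ≤ ρ * ‖x - x'‖)
    (hglip : ∀ x x' y, ‖gradx x y - gradx x' y‖ ≤ L * ‖x - x'‖)
    (hgbd : ∀ x y, ‖gradx x y‖ ≤ ℓ)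
    (x : EuclideanSpace ℝ (Fin k)) (y : EuclideanSpace ℝ (Fin d))
    (lam : ℝ) (v : EuclideanSpace ℝ (Fin k))
    (hlam : lam < 0) (hv : ‖v‖ = 1) (hev : Hx x y v = lam • v)
    (hsign : ⟪v, gradx x y⟫ ≤ 0)
    (α : ℝ) (hα : α = -lam / (2*ρ))
    (Δ : EuclideanSpace ℝ (Fin k)) (hΔ : Δ = α • v - η • gradx x y)
    (hηbd : η ≤ (Real.sqrt (9*L^2 + 48*ρ*ℓ) - 3*L) / (8*ρ*ℓ)) :
    f (x + Δ, y) ≤ f (x, y) - (η/2) * ‖gradx x y‖^2 + lam^3 / (24*ρ^2) := by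
  set φ := fun u => f (u, y)
  set g := gradx x y
  have hφ : ContDiff ℝ 2 φ := hf.comp (contDiff_id.prodMk contDiff_const)
  have hgrad : (fun u => gradx u y) = gradient φ := funext fun u => hgradx u y
  have hHess (u) : Hx u y = fderiv ℝ (gradient φ) u := by rw [hHx, hgrad]
  have hα0 : 0 < α := by rw [hα]; exact div_pos (by linarith) (by linarith)
  have hHL : ‖Hx x y‖ ≤ L := by
    have hlip : LipschitzWith (Real.toNNReal L) (fun u => gradx u y) :=
      LipschitzWith.of_dist_le' fun a b => by simpa only [dist_eq_norm] using hglip a b y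
    have := norm_fderiv_le_of_lipschitz ℝ (x₀ := x) hlip
    rwa [Real.coe_toNNReal _ hL.le, ← hHx] at this
  have htaylor := le_add_inner_gradient_add_half_inner_fderiv_gradient
    (hφ.differentiable two_ne_zero) hφ.differentiable_gradient
    (fun u u' => by simpa only [hHess] using hHlip u u' y) x Δ
  rw [← hgradx, ← hHess] at htaylor
  have hmodel := inner_add_half_inner_apply_smul_sub_smul_le
    (by simpa only [hHess] using hφ.isSymmetric_fderiv_gradient x) hHL hv hev hlam.le hsign
    hα0.le hη.le
  have hcube := norm_smul_sub_smul_pow_three_le (g := g) hv hα0.le hη.le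
  have hstep : 4 * ρ * ℓ * η ^ 2 + 3 * L * η ≤ 3 :=
    mul_sq_add_mul_le_of_le_quadratic_root (by positivity) (by norm_num) (by positivity)
      (by rwa [show (3 * L) ^ 2 + 4 * (4 * ρ * ℓ) * 3 = 9 * L ^ 2 + 48 * ρ * ℓ by ring,
        show 2 * (4 * ρ * ℓ) = 8 * ρ * ℓ by ring])
  have hconst : lam * α ^ 2 / 2 + 2 / 3 * ρ * α ^ 3 = lam ^ 3 / (24 * ρ ^ 2) := by
    rw [hα]; field_simp; ring
  have hg3 : (η * ‖g‖) ^ 3 ≤ η ^ 3 * ℓ * ‖g‖ ^ 2 := by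
    have := mul_le_mul_of_nonneg_left (hgbd x y) (by positivity : 0 ≤ η ^ 3 * ‖g‖ ^ 2)
    linarith
  subst hΔ
  linarith [mul_le_mul_of_nonneg_left hcube (by positivity : 0 ≤ ρ / 6),
    mul_le_mul_of_nonneg_left hg3 (by positivity : 0 ≤ 2 / 3 * ρ),
    mul_le_mul_of_nonneg_right hstep (by positivity : 0 ≤ η / 6 * ‖g‖ ^ 2)]

theorem stmt_16 {k d : ℕ}
    (f : EuclideanSpace ℝ (Fin k) × EuclideanSpace ℝ (Fin d) → ℝ)
    (hf : ContDiff ℝ 2 f)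
    (ρ L ℓ η : ℝ) (hρ : 0 < ρ) (hL : 0 < L) (hℓ : 0 < ℓ) (hη : 0 < η)
    (gradx : EuclideanSpace ℝ (Fin k) → EuclideanSpace ℝ (Fin d) → EuclideanSpace ℝ (Fin k))
    (hgradx : ∀ x y, gradx x y = gradient (fun u => f (u, y)) x)
    (Hx : EuclideanSpace ℝ (Fin k) → EuclideanSpace ℝ (Fin d) →
      (EuclideanSpace ℝ (Fin k) →L[ℝ] EuclideanSpace ℝ (Fin k)))
    (hHx : ∀ x y, Hx x y = fderiv ℝ (fun u => gradx u y) x)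
    (hHlip : ∀ x x' y, ‖Hx x y - Hx x' y‖ ≤ ρ * ‖x - x'‖)
    (hglip : ∀ x x' y, ‖gradx x y - gradx x' y‖ ≤ L * ‖x - x'‖)
    (hgbd : ∀ x y, ‖gradx x y‖ ≤ ℓ)
    (x : EuclideanSpace ℝ (Fin k)) (y : EuclideanSpace ℝ (Fin d))
    (lam : ℝ) (v : EuclideanSpace ℝ (Fin k))
    (hlam : lam < 0) (hv : ‖v‖ = 1) (hev : Hx x y v = lam • v)
    (hmin : ∀ u, lam * ‖u‖^2 ≤ ⟪u, Hx x y u⟫)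
    (hsign : ⟪v, gradx x y⟫ ≤ 0)
    (α : ℝ) (hα : α = -lam / (2*ρ))
    (Δ : EuclideanSpace ℝ (Fin k)) (hΔ : Δ = α • v - η • gradx x y)
    (hηbd : η ≤ (Real.sqrt (9*L^2 + 48*ρ*ℓ) - 3*L) / (8*ρ*ℓ)) :
    f (x + Δ, y) ≤ f (x, y) - (η/2) * ‖gradx x y‖^2 + lam^3 / (24*ρ^2) :=
  stmt_16_general f hf ρ L ℓ η hρ hL hℓ hη gradx hgradx Hx hHx hHlip hglip hgbd x y lam v hlam hv
    hev hsign α hα Δ hΔ hηbd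
end

section
/- Let P ∈ ℝ^{k×k} and Q ∈ ℝ^{d×d} be symmetric with P ≻ 0 and Q ≻ 0, B ∈ ℝ^{d×k} arbitrary, H = [[-P, -Bᵀ],[B, -Q]], and let A be symmetric positive definite of size (k+d). Then for all sufficiently small η > 0, every eigenvalue of the matrix I + ηAH lies strictly inside the unit disk of ℂ. -/
/-!
If `AHv = μv` with `v ≠ 0` (over `ℂ`, where `A` stays positive definite), write `v = Aw`.
As `A` is Hermitian, `v*Hv = w*AHv = μ · w*Aw` with `w*Aw > 0`, while
`Re(v*Hv) = ½ v*(H + Hᴴ)v < 0` because the symmetric part of `H` is `-diag(P, Q)`.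
So every eigenvalue `μ` of `AH` has `Re μ < 0`, whence `|1 + ημ|² = 1 + η(2 Re μ + η|μ|²) < 1`
for small `η > 0`; the eigenvalues of `I + ηAH` are these `1 + ημ`, finitely many.
-/

open Matrix Filter Topology
open scoped ComplexOrder Pointwise

theorem Complex.eventually_norm_one_add_mul_lt_one {z : ℂ} (hz : z.re < 0) :
    ∀ᶠ η : ℝ in 𝓝[>] 0, ‖1 + η * z‖ < 1 := by
  have hsmall : ∀ᶠ η : ℝ in 𝓝[>] 0, η * ‖z‖ ^ 2 < -2 * z.re :=
    nhdsWithin_le_nhds <|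
      ((continuous_id.mul continuous_const).tendsto' 0 0 (by simp)).eventually
        (gt_mem_nhds (by linarith))
  filter_upwards [hsmall, self_mem_nhdsWithin] with η hη (hpos : 0 < η)
  rw [Complex.sq_norm, Complex.normSq_apply] at hη
  rw [← sq_lt_one_iff₀ (norm_nonneg _), Complex.sq_norm, Complex.normSq_apply]
  simp only [Complex.add_re, Complex.one_re, Complex.re_ofReal_mul, Complex.add_im,
    Complex.one_im, Complex.im_ofReal_mul, zero_add]
  nlinarith

theorem Complex.exists_pos_forall_norm_one_add_mul_lt_one {s : Set ℂ} (hs : s.Finite)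
    (hre : ∀ z ∈ s, z.re < 0) :
    ∃ η₀ > (0 : ℝ), ∀ η : ℝ, 0 < η → η < η₀ → ∀ z ∈ s, ‖1 + η * z‖ < 1 := by
  obtain ⟨η₀, hη₀, h⟩ := (nhdsGT_basis (0 : ℝ)).eventually_iff.1 <|
    hs.eventually_all.2 fun z hz ↦ eventually_norm_one_add_mul_lt_one (hre z hz)
  exact ⟨η₀, hη₀, fun η h₀ h₁ ↦ h ⟨h₀, h₁⟩⟩

theorem spectrum.one_add_smul_eq {𝕜 A : Type*} [Field 𝕜] [Ring A] [Algebra 𝕜 A] (a : A)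
    {c : 𝕜} (hc : c ≠ 0) : spectrum 𝕜 (1 + c • a) = (1 + c * ·) '' spectrum 𝕜 a := by
  have hscale : spectrum 𝕜 (c • a) = c • spectrum 𝕜 a :=
    spectrum.unit_smul_eq_smul a (Units.mk0 c hc)
  rw [← map_one (algebraMap 𝕜 A), ← spectrum.singleton_add_eq, hscale, Set.singleton_add,
    ← Set.image_smul, Set.image_image]
  rfl

namespace Matrix

theorem exists_mulVec_eq_smul_of_mem_spectrum {K n : Type*} [Field K] [Fintype n]
    [DecidableEq n] {M : Matrix n n K} {μ : K} (hμ : μ ∈ spectrum K M) :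
    ∃ v ≠ 0, M *ᵥ v = μ • v := by
  rw [← spectrum_toLin', ← Module.End.hasEigenvalue_iff_mem_spectrum] at hμ
  obtain ⟨v, hv⟩ := hμ.exists_hasEigenvector
  exact ⟨v, hv.2, by simpa using hv.apply_eq_smul⟩

theorem PosDef.fromBlocks {l m R : Type*} [Fintype l] [Fintype m] [CommRing R]
    [PartialOrder R] [StarRing R] [IsOrderedAddMonoid R] {P : Matrix l l R} {Q : Matrix m m R}
    (hP : P.PosDef) (hQ : Q.PosDef) : (Matrix.fromBlocks P 0 0 Q).PosDef := by
  refine .of_dotProduct_mulVec_pos (hP.isHermitian.fromBlocks (by simp) hQ.isHermitian)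
    fun x hx ↦ ?_
  obtain ⟨a, b, rfl⟩ : ∃ a b, x = Sum.elim a b := ⟨_, _, (Sum.elim_comp_inl_inr x).symm⟩
  rw [fromBlocks_mulVec, Function.star_sumElim, sumElim_dotProduct_sumElim]
  simp only [zero_mulVec, add_zero, zero_add]
  have hsplit : a ≠ 0 ∨ b ≠ 0 := by
    by_contra! h
    exact hx (by rw [h.1, h.2, Sum.elim_zero_zero])
  rcases hsplit with h | h
  · exact add_pos_of_pos_of_nonneg (hP.dotProduct_mulVec_pos h)
      (hQ.posSemidef.dotProduct_mulVec_nonneg _)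
  · exact add_pos_of_nonneg_of_pos (hP.posSemidef.dotProduct_mulVec_nonneg _)
      (hQ.dotProduct_mulVec_pos h)

section Complexification

variable {n : Type*} [Fintype n]

theorem re_star_dotProduct_map_ofReal_mulVec (M : Matrix n n ℝ) (x : n → ℂ) :
    (star x ⬝ᵥ (M.map Complex.ofReal *ᵥ x)).re =
      (Complex.re ∘ x) ⬝ᵥ (M *ᵥ (Complex.re ∘ x)) +
        (Complex.im ∘ x) ⬝ᵥ (M *ᵥ (Complex.im ∘ x)) := by
  simp only [dotProduct, mulVec, Complex.re_sum, Finset.mul_sum, ← Finset.sum_add_distrib]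
  refine Finset.sum_congr rfl fun i _ ↦ Finset.sum_congr rfl fun j _ ↦ ?_
  simp [Complex.mul_re, Complex.mul_im]

theorem PosDef.map_ofReal {M : Matrix n n ℝ} (hM : M.PosDef) :
    (M.map Complex.ofReal).PosDef := by
  have hherm : (M.map Complex.ofReal).IsHermitian :=
    hM.isHermitian.map _ fun x ↦ (Complex.conj_ofReal x).symm
  refine .of_dotProduct_mulVec_pos hherm fun x hx ↦
    Complex.lt_def.2 ⟨?_, (hherm.im_star_dotProduct_mulVec_self x).symm⟩
  rw [Complex.zero_re, re_star_dotProduct_map_ofReal_mulVec]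
  have hsplit : Complex.re ∘ x ≠ 0 ∨ Complex.im ∘ x ≠ 0 := by
    by_contra! h
    exact hx (funext fun i ↦ Complex.ext (congrFun h.1 i) (congrFun h.2 i))
  rcases hsplit with h | h
  · exact add_pos_of_pos_of_nonneg (by simpa using hM.dotProduct_mulVec_pos h)
      (by simpa using hM.posSemidef.dotProduct_mulVec_nonneg _)
  · exact add_pos_of_nonneg_of_pos (by simpa using hM.posSemidef.dotProduct_mulVec_nonneg _)
      (by simpa using hM.dotProduct_mulVec_pos h)

end Complexification

section Dissipative

variable {𝕜 n : Type*} [RCLike 𝕜] [Fintype n]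

theorem re_star_dotProduct_conjTranspose_mulVec (H : Matrix n n 𝕜) (v : n → 𝕜) :
    RCLike.re (star v ⬝ᵥ (Hᴴ *ᵥ v)) = RCLike.re (star v ⬝ᵥ (H *ᵥ v)) := by
  rw [dotProduct_mulVec, ← star_mulVec, star_dotProduct, RCLike.star_def, RCLike.conj_re]

theorem re_star_dotProduct_mulVec_lt_zero {H : Matrix n n 𝕜} (hH : (-(H + Hᴴ)).PosDef)
    {v : n → 𝕜} (hv : v ≠ 0) : RCLike.re (star v ⬝ᵥ (H *ᵥ v)) < 0 := by
  have := hH.re_dotProduct_pos hv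
  rw [neg_mulVec, add_mulVec, dotProduct_neg, dotProduct_add, map_neg, map_add,
    re_star_dotProduct_conjTranspose_mulVec] at this
  linarith

theorem re_lt_zero_of_mem_spectrum_mul [DecidableEq n] {A H : Matrix n n 𝕜}
    (hA : A.PosDef) (hH : (-(H + Hᴴ)).PosDef) {μ : 𝕜} (hμ : μ ∈ spectrum 𝕜 (A * H)) :
    RCLike.re μ < 0 := by
  obtain ⟨v, hv, hAHv⟩ := exists_mulVec_eq_smul_of_mem_spectrum hμ
  obtain ⟨w, rfl⟩ := mulVec_surjective_iff_isUnit.2 hA.isUnit v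
  have hw : w ≠ 0 := by rintro rfl; simp at hv
  have hkey : star (A *ᵥ w) ⬝ᵥ (H *ᵥ A *ᵥ w) = μ * (star w ⬝ᵥ (A *ᵥ w)) := by
    rw [star_mulVec, hA.isHermitian.eq, ← dotProduct_mulVec, mulVec_mulVec, hAHv,
      dotProduct_smul, smul_eq_mul]
  obtain ⟨hc_re, hc_im⟩ := RCLike.pos_iff.1 (hA.dotProduct_mulVec_pos hw)
  have := re_star_dotProduct_mulVec_lt_zero hH hv
  rw [hkey, RCLike.mul_re, hc_im, mul_zero, sub_zero] at this
  exact neg_of_mul_neg_left this hc_re.le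

end Dissipative

end Matrix

theorem stmt_19 {k d : ℕ}
    (P : Matrix (Fin k) (Fin k) ℝ) (Q : Matrix (Fin d) (Fin d) ℝ)
    (B : Matrix (Fin d) (Fin k) ℝ) (hP : P.PosDef) (hQ : Q.PosDef)
    (A : Matrix (Fin k ⊕ Fin d) (Fin k ⊕ Fin d) ℝ) (hA : A.PosDef)
    (H : Matrix (Fin k ⊕ Fin d) (Fin k ⊕ Fin d) ℝ)
    (hH : H = Matrix.fromBlocks (-P) (-Bᵀ) B (-Q)) :
    ∃ η₀ > (0:ℝ), ∀ η : ℝ, 0 < η → η < η₀ →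
      ∀ μ : ℂ, ((1 + η • (A * H)).map Complex.ofReal).charpoly.IsRoot μ →
        ‖μ‖ < 1 := by
  have hsymm : -(H + Hᴴ) = (2 : ℝ) • Matrix.fromBlocks P 0 0 Q := by
    simp only [hH, fromBlocks_conjTranspose, conjTranspose_neg, hP.isHermitian.eq,
      hQ.isHermitian.eq, fromBlocks_add, fromBlocks_neg, fromBlocks_smul]
    simp [two_smul]
  have hdiss : (-(H.map Complex.ofReal + (H.map Complex.ofReal)ᴴ)).PosDef := by
    convert ((hP.fromBlocks hQ).smul (two_pos : (0 : ℝ) < 2)).map_ofReal using 1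
    rw [← hsymm]
    ext i j
    simp
  have hmul : (A * H).map Complex.ofReal = A.map Complex.ofReal * H.map Complex.ofReal :=
    Matrix.map_mul (f := Complex.ofRealHom)
  have hre : ∀ z ∈ spectrum ℂ ((A * H).map Complex.ofReal), z.re < 0 := fun z hz ↦
    re_lt_zero_of_mem_spectrum_mul hA.map_ofReal hdiss (hmul ▸ hz)
  obtain ⟨η₀, hη₀, hsmall⟩ :=
    Complex.exists_pos_forall_norm_one_add_mul_lt_one (finite_spectrum _) hre
  refine ⟨η₀, hη₀, fun η hη hηη₀ μ hμ ↦ ?_⟩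
  have hmap : (1 + η • (A * H)).map Complex.ofReal =
      1 + (η : ℂ) • (A * H).map Complex.ofReal := by
    simp [Matrix.map_add, Matrix.map_smul, Complex.coe_smul]
  rw [← mem_spectrum_iff_isRoot_charpoly, hmap,
    spectrum.one_add_smul_eq _ (Complex.ofReal_ne_zero.2 hη.ne')] at hμ
  obtain ⟨z, hz, rfl⟩ := hμ
  exact hsmall η hη hηη₀ z hz
end
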